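/- arXiv:2502.13455 — 5 statements merged into one kernel-verified Lean document; each statement's English description precedes it below -/
import Mathlib

section
/- Let L be the Laplacian matrix of a connected graph G on n vertices and L̂ a real symmetric matrix with all row sums and column sums zero. Then (I - L L†) L̂ (I - L† L) = 0; consequently, the Moore-Penrose inverse of the dual matrix L_w = L + L̂ ε exists. -/
open Matrix

/-- The dual matrix `A_s + A_d ε` built from its standard and infinitesimal parts. -/
def dm {m n : Type*} (A B : Matrix m n ℝ) : Matrix m n (DualNumber ℝ) :=
  Matrix.of fun i j => TrivSqZeroExt.inl (A i j) + TrivSqZeroExt.inr (B i j)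

/-! Since `G` is connected, `ker L` consists of the constant vectors. `L` kills every column
of `I - L†L`, so these columns are constant, and `L̂`, having zero row sums, kills them:
`L̂ (I - L†L) = 0`. Transposing, the zero column sums give `(I - LL†) L̂ = 0`. Thus `L̂` lies in
both the range and the corange of `L`, and the dual product rule
`(A + Bε)(C + Dε) = AC + (AD + BC)ε` shows that `L† - L† L̂ L† ε` satisfies the Penrose
equations for `L + L̂ ε`. -/

open TrivSqZeroExt

theorem dm_mul {l m n : Type*} [Fintype m] (A B : Matrix l m ℝ) (C D : Matrix m n ℝ) :
    dm A B * dm C D = dm (A * C) (A * D + B * C) := by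
  ext i j <;>
    simp [dm, Matrix.mul_apply, fst_sum, snd_sum, Finset.sum_add_distrib, mul_add, add_mul,
      mul_comm, add_comm]

theorem dm_transpose {m n : Type*} (A B : Matrix m n ℝ) : (dm A B)ᵀ = dm Aᵀ Bᵀ := rfl

namespace Matrix

variable {k l m n R : Type*}

def IsMoorePenroseInverse [Fintype m] [Fintype n] [Semiring R] (A : Matrix m n R)
    (X : Matrix n m R) : Prop :=
  A * X * A = A ∧ X * A * X = X ∧ (A * X)ᵀ = A * X ∧ (X * A)ᵀ = X * A

theorem mul_eq_zero_of_forall_mulVec_eq_zero [Fintype m] [NonUnitalNonAssocSemiring R]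
    {A : Matrix k m R} {B : Matrix l m R} {K : Matrix m n R}
    (hker : ∀ v, B *ᵥ v = 0 → A *ᵥ v = 0) (hK : B * K = 0) : A * K = 0 := by
  ext i j
  have hcol : B *ᵥ (fun k => K k j) = 0 := funext fun i => congrFun (congrFun hK i) j
  exact congrFun (hker _ hcol) i

theorem IsMoorePenroseInverse.dm [Fintype m] [Fintype n] {A : Matrix m n ℝ} {Ad : Matrix n m ℝ}
    (h : IsMoorePenroseInverse A Ad) {B : Matrix m n ℝ} (hl : A * Ad * B = B)
    (hr : B * Ad * A = B) :
    IsMoorePenroseInverse (_root_.dm A B) (_root_.dm Ad (-(Ad * B * Ad))) := by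
  obtain ⟨h1, h2, h3, h4⟩ := h
  have hlC (C : Matrix n m ℝ) : A * (Ad * (B * C)) = B * C := by
    rw [← Matrix.mul_assoc, ← Matrix.mul_assoc, hl]
  simp only [Matrix.mul_assoc] at h1 h2 hl hr
  refine ⟨?_, ?_, ?_, ?_⟩ <;> simp only [dm_mul, dm_transpose] <;> congr 1 <;>
    simp [Matrix.mul_assoc, h1, h2, hl, hr, hlC]

end Matrix

namespace SimpleGraph

variable {V : Type*} [Fintype V] [DecidableEq V] {G : SimpleGraph V} [DecidableRel G.Adj]

theorem mulVec_eq_zero_of_lapMatrix_mulVec_eq_zero {W : Type*} (hG : G.Connected)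
    {A : Matrix W V ℝ} (hA : A *ᵥ (fun _ => 1) = 0) {v : V → ℝ}
    (hv : G.lapMatrix ℝ *ᵥ v = 0) : A *ᵥ v = 0 := by
  obtain ⟨u⟩ := hG.nonempty
  have hconst : v = v u • fun _ => 1 := funext fun i => by
    simpa using (lapMatrix_mulVec_eq_zero_iff_forall_reachable G).mp hv i u (hG.preconnected i u)
  rw [hconst, mulVec_smul, hA, smul_zero]

theorem mul_eq_zero_of_lapMatrix_mul_eq_zero {W : Type*} (hG : G.Connected)
    {A : Matrix W V ℝ} (hA : A *ᵥ (fun _ => 1) = 0) {K : Matrix V W ℝ}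
    (hK : G.lapMatrix ℝ * K = 0) : A * K = 0 :=
  mul_eq_zero_of_forall_mulVec_eq_zero
    (fun _ => mulVec_eq_zero_of_lapMatrix_mulVec_eq_zero hG hA) hK

end SimpleGraph

open SimpleGraph

theorem dual_laplacian_mp_exists_general {n : ℕ}
    (G : SimpleGraph (Fin n)) [DecidableRel G.Adj] (hG : G.Connected)
    (Lhat : Matrix (Fin n) (Fin n) ℝ)
    (hrow : Lhat *ᵥ (fun _ => (1 : ℝ)) = 0)
    (hcol : (fun _ => (1 : ℝ)) ᵥ* Lhat = 0)
    (Ld : Matrix (Fin n) (Fin n) ℝ)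
    (h1 : G.lapMatrix ℝ * Ld * G.lapMatrix ℝ = G.lapMatrix ℝ)
    (h2 : Ld * G.lapMatrix ℝ * Ld = Ld)
    (h3 : (G.lapMatrix ℝ * Ld)ᵀ = G.lapMatrix ℝ * Ld)
    (h4 : (Ld * G.lapMatrix ℝ)ᵀ = Ld * G.lapMatrix ℝ) :
    (1 - G.lapMatrix ℝ * Ld) * Lhat * (1 - Ld * G.lapMatrix ℝ) = 0 ∧
      ∃ X : Matrix (Fin n) (Fin n) (DualNumber ℝ),
        dm (G.lapMatrix ℝ) Lhat * X * dm (G.lapMatrix ℝ) Lhat = dm (G.lapMatrix ℝ) Lhat ∧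
        X * dm (G.lapMatrix ℝ) Lhat * X = X ∧
        (dm (G.lapMatrix ℝ) Lhat * X)ᵀ = dm (G.lapMatrix ℝ) Lhat * X ∧
        (X * dm (G.lapMatrix ℝ) Lhat)ᵀ = X * dm (G.lapMatrix ℝ) Lhat := by
  set L := G.lapMatrix ℝ
  have hkerL : L * (1 - Ld * L) = 0 := by
    rw [Matrix.mul_sub, ← Matrix.mul_assoc, h1, mul_one, sub_self]
  have hkerLt : L * (1 - L * Ld)ᵀ = 0 :=
    calc L * (1 - L * Ld)ᵀ = ((1 - L * Ld) * L)ᵀ := by rw [transpose_mul, G.isSymm_lapMatrix ℝ]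
      _ = 0 := by rw [Matrix.sub_mul, Matrix.one_mul, h1, sub_self, transpose_zero]
  have hright : Lhat * (1 - Ld * L) = 0 := mul_eq_zero_of_lapMatrix_mul_eq_zero hG hrow hkerL
  have hleft : (1 - L * Ld) * Lhat = 0 := by
    rw [← transpose_transpose ((1 - L * Ld) * Lhat), transpose_mul,
      mul_eq_zero_of_lapMatrix_mul_eq_zero hG (by rwa [mulVec_transpose]) hkerLt, transpose_zero]
  refine ⟨by rw [hleft, Matrix.zero_mul], _, IsMoorePenroseInverse.dm ⟨h1, h2, h3, h4⟩ ?_ ?_⟩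
  · rwa [Matrix.sub_mul, Matrix.one_mul, sub_eq_zero, eq_comm] at hleft
  · rwa [Matrix.mul_sub, Matrix.mul_one, sub_eq_zero, eq_comm, ← Matrix.mul_assoc] at hright

/-- For the Laplacian `L` of a connected graph with Moore-Penrose inverse `L†` and a
symmetric perturbation `L̂` with zero row and column sums, one has
`(I - L L†) L̂ (I - L† L) = 0`; consequently the Moore-Penrose inverse of the
dual matrix `L_w = L + L̂ ε` exists. -/
theorem dual_laplacian_mp_exists {n : ℕ} (hn : 0 < n)
    (G : SimpleGraph (Fin n)) [DecidableRel G.Adj] (hG : G.Connected)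
    (Lhat : Matrix (Fin n) (Fin n) ℝ) (hsym : Lhatᵀ = Lhat)
    (hrow : Lhat *ᵥ (fun _ => (1 : ℝ)) = 0)
    (hcol : (fun _ => (1 : ℝ)) ᵥ* Lhat = 0)
    (Ld : Matrix (Fin n) (Fin n) ℝ)
    (h1 : G.lapMatrix ℝ * Ld * G.lapMatrix ℝ = G.lapMatrix ℝ)
    (h2 : Ld * G.lapMatrix ℝ * Ld = Ld)
    (h3 : (G.lapMatrix ℝ * Ld)ᵀ = G.lapMatrix ℝ * Ld)
    (h4 : (Ld * G.lapMatrix ℝ)ᵀ = Ld * G.lapMatrix ℝ) :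
    (1 - G.lapMatrix ℝ * Ld) * Lhat * (1 - Ld * G.lapMatrix ℝ) = 0 ∧
      ∃ X : Matrix (Fin n) (Fin n) (DualNumber ℝ),
        dm (G.lapMatrix ℝ) Lhat * X * dm (G.lapMatrix ℝ) Lhat = dm (G.lapMatrix ℝ) Lhat ∧
        X * dm (G.lapMatrix ℝ) Lhat * X = X ∧
        (dm (G.lapMatrix ℝ) Lhat * X)ᵀ = dm (G.lapMatrix ℝ) Lhat * X ∧
        (X * dm (G.lapMatrix ℝ) Lhat)ᵀ = X * dm (G.lapMatrix ℝ) Lhat :=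
  dual_laplacian_mp_exists_general G hG Lhat hrow hcol Ld h1 h2 h3 h4
end

section
/- Partition the dual Laplacian of a connected dual number weighted graph on n vertices as L_w = [[L̃₁₁, L̃₁₂],[L̃₁₂ᵀ, L̃₂₂]] with L̃₁₁ of size (n-1)×(n-1). Then L̃₁₁ is invertible over the dual numbers and the block matrix X = [[L̃₁₁^{-1}, 0],[0, 0]] is a {1}-inverse of L_w, i.e., L_w X L_w = L_w. -/
open Matrix

-- Auxiliary
lemma lap_sub_det_ne_zero {n : ℕ} (G : SimpleGraph (Fin (n + 1))) [DecidableRel G.Adj]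
    (hG : G.Connected) :
    ((G.lapMatrix ℝ).submatrix Fin.castSucc Fin.castSucc).det ≠ 0 := by
  intro h0
  obtain ⟨v, hv, hv0⟩ := (Matrix.exists_mulVec_eq_zero_iff).mpr h0
  set y : Fin (n + 1) → ℝ := fun i => if h : (i : ℕ) < n then v ⟨i, h⟩ else 0 with hy
  have hy1 : ∀ j : Fin n, y (Fin.castSucc j) = v j := by
    intro j; simp [hy]
  have hy2 : y (Fin.last n) = 0 := by simp [hy]
  have hw : ∀ i : Fin n, ((G.lapMatrix ℝ) *ᵥ y) (Fin.castSucc i) = 0 := by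
    intro i
    have : ((G.lapMatrix ℝ) *ᵥ y) (Fin.castSucc i)
        = (((G.lapMatrix ℝ).submatrix Fin.castSucc Fin.castSucc) *ᵥ v) i := by
      simp [Matrix.mulVec, dotProduct, Fin.sum_univ_castSucc, hy1, hy2]
    rw [this, hv0]; rfl
  have hq : Matrix.toLinearMap₂' ℝ (G.lapMatrix ℝ) y y = 0 := by
    rw [Matrix.toLinearMap₂'_apply']
    rw [dotProduct, Fin.sum_univ_castSucc]
    simp [hy1, hy2, hw]
  have hcst := (G.lapMatrix_toLinearMap₂'_apply'_eq_zero_iff_forall_reachable y).mp hq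
  apply hv
  funext i
  have := hcst (Fin.castSucc i) (Fin.last n) (hG.preconnected _ _)
  rw [hy1, hy2] at this
  exact this

/-- Partitioning the dual Laplacian `L_w` of a connected dual number weighted graph on
`n+1` vertices with leading block `L̃₁₁` of size `n × n`, the block `L̃₁₁` is invertible
over the dual numbers and `X = [[L̃₁₁⁻¹, 0],[0,0]]` is a `{1}`-inverse of `L_w`. -/
theorem dual_laplacian_block_one_inverse {n : ℕ} (hn : 0 < n)
    (G : SimpleGraph (Fin (n + 1))) [DecidableRel G.Adj] (hG : G.Connected)
    (Lhat : Matrix (Fin (n + 1)) (Fin (n + 1)) ℝ) (hsym : Lhatᵀ = Lhat)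
    (hrow : Lhat *ᵥ (fun _ => (1 : ℝ)) = 0)
    (hcol : (fun _ => (1 : ℝ)) ᵥ* Lhat = 0)
    (Lw : Matrix (Fin (n + 1)) (Fin (n + 1)) (DualNumber ℝ))
    (hLw : Lw = dm (G.lapMatrix ℝ) Lhat)
    (L11 : Matrix (Fin n) (Fin n) (DualNumber ℝ))
    (hL11 : L11 = Lw.submatrix Fin.castSucc Fin.castSucc)
    (X : Matrix (Fin (n + 1)) (Fin (n + 1)) (DualNumber ℝ))
    (hXdef : X = Matrix.of fun (i j : Fin (n + 1)) =>
      if hi : (i : ℕ) < n then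
        if hj : (j : ℕ) < n then L11⁻¹ ⟨i, hi⟩ ⟨j, hj⟩ else 0
      else 0) :
    IsUnit L11 ∧ Lw * X * Lw = Lw := by
  -- L11 maps under fst to the real submatrix
  have hmap : L11.map (TrivSqZeroExt.fstHom ℝ ℝ ℝ)
      = (G.lapMatrix ℝ).submatrix Fin.castSucc Fin.castSucc := by
    ext i j
    simp [hL11, hLw, dm, Matrix.map_apply]
  have hdet : IsUnit L11.det := by
    rw [TrivSqZeroExt.isUnit_iff_isUnit_fst]
    have : (TrivSqZeroExt.fstHom ℝ ℝ ℝ : DualNumber ℝ →+* ℝ) L11.det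
        = (L11.map (TrivSqZeroExt.fstHom ℝ ℝ ℝ)).det := RingHom.map_det _ _
    rw [show L11.det.fst = (TrivSqZeroExt.fstHom ℝ ℝ ℝ : DualNumber ℝ →+* ℝ) L11.det from rfl,
      this, hmap]
    exact isUnit_iff_ne_zero.mpr (lap_sub_det_ne_zero G hG)
  have hunit : IsUnit L11 := (Matrix.isUnit_iff_isUnit_det _).mpr hdet
  refine ⟨hunit, ?_⟩
  -- row and column sums of Lw vanish
  have hrowL : ∀ i, ∑ j, Lw i j = 0 := by
    intro i
    rw [hLw]
    have h1 : ∑ j, G.lapMatrix ℝ i j = 0 := by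
      have := congrFun (G.lapMatrix_mulVec_const_eq_zero (R := ℝ)) i
      simpa [Matrix.mulVec, dotProduct] using this
    have h2 : ∑ j, Lhat i j = 0 := by
      have := congrFun hrow i
      simpa [Matrix.mulVec, dotProduct] using this
    simp only [dm, Matrix.of_apply]
    rw [Finset.sum_add_distrib, ← TrivSqZeroExt.inl_sum, ← TrivSqZeroExt.inr_sum, h1, h2]
    simp
  have hcolL : ∀ j, ∑ i, Lw i j = 0 := by
    intro j
    rw [hLw]
    have h1 : ∑ i, G.lapMatrix ℝ i j = 0 := by
      have hs : ∀ a b, G.lapMatrix ℝ a b = G.lapMatrix ℝ b a := fun a b =>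
        (G.isSymm_lapMatrix (R := ℝ)).apply b a
      have h0 : ∑ i, G.lapMatrix ℝ j i = 0 := by
        have := congrFun (G.lapMatrix_mulVec_const_eq_zero (R := ℝ)) j
        simpa [Matrix.mulVec, dotProduct] using this
      calc ∑ i, G.lapMatrix ℝ i j = ∑ i, G.lapMatrix ℝ j i := Finset.sum_congr rfl
            (fun i _ => hs i j)
        _ = 0 := h0
    have h2 : ∑ i, Lhat i j = 0 := by
      have := congrFun hcol j
      simpa [Matrix.vecMul, dotProduct] using this
    simp only [dm, Matrix.of_apply]
    rw [Finset.sum_add_distrib, ← TrivSqZeroExt.inl_sum, ← TrivSqZeroExt.inr_sum, h1, h2]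
    simp
  -- block decomposition
  have hAA : L11 * L11⁻¹ = 1 := Matrix.mul_nonsing_inv _ hdet
  have hAA' : L11⁻¹ * L11 = 1 := Matrix.nonsing_inv_mul _ hdet
  set e : Fin n ⊕ Fin 1 ≃ Fin (n + 1) := finSumFinEquiv with he
  have heL : ∀ i : Fin n, e (Sum.inl i) = Fin.castSucc i := fun i => rfl
  have heR : ∀ j : Fin 1, e (Sum.inr j) = Fin.last n := by
    intro j
    rw [he, finSumFinEquiv_apply_right]
    ext
    simp [Fin.natAdd, Fin.last, Fin.val_eq_zero j]
  set B : Matrix (Fin n) (Fin 1) (DualNumber ℝ) :=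
    Matrix.of fun i _ => Lw (Fin.castSucc i) (Fin.last n) with hBdef
  set C : Matrix (Fin 1) (Fin n) (DualNumber ℝ) :=
    Matrix.of fun _ j => Lw (Fin.last n) (Fin.castSucc j) with hCdef
  set D : Matrix (Fin 1) (Fin 1) (DualNumber ℝ) :=
    Matrix.of fun _ _ => Lw (Fin.last n) (Fin.last n) with hDdef
  have hsub : Lw.submatrix e e = Matrix.fromBlocks L11 B C D := by
    refine Matrix.ext fun i j => ?_
    cases i with
    | inl i => cases j with
      | inl j => simp [heL, hL11]
      | inr j => simp [heL, heR, hBdef]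
    | inr i => cases j with
      | inl j => simp [heL, heR, hCdef]
      | inr j => simp [heR, hDdef]
  have hXsub : X.submatrix e e = Matrix.fromBlocks L11⁻¹ 0 0 0 := by
    refine Matrix.ext fun i j => ?_
    cases i with
    | inl i => cases j with
      | inl j =>
        simp only [Matrix.submatrix_apply, heL, hXdef, Matrix.of_apply,
          Matrix.fromBlocks_apply₁₁]
        rw [dif_pos (by simpa using i.isLt), dif_pos (by simpa using j.isLt)]
        congr 1 <;> ext <;> simp
      | inr j =>
        simp only [Matrix.submatrix_apply, heL, heR, hXdef, Matrix.of_apply,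
          Matrix.fromBlocks_apply₁₂]
        rw [dif_pos (by simpa using i.isLt), dif_neg (by simp)]
        simp
    | inr i =>
      simp only [Matrix.submatrix_apply, heR, hXdef, Matrix.of_apply]
      rw [dif_neg (by simp)]
      cases j with
      | inl j => simp
      | inr j => simp
  -- block identities from row/column sums
  set Jc : Matrix (Fin n) (Fin 1) (DualNumber ℝ) := Matrix.of fun _ _ => -1 with hJc
  set Jr : Matrix (Fin 1) (Fin n) (DualNumber ℝ) := Matrix.of fun _ _ => -1 with hJr
  have hB : B = L11 * Jc := by
    refine Matrix.ext fun i j => ?_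
    have := hrowL (Fin.castSucc i)
    rw [Fin.sum_univ_castSucc] at this
    have hsum : ∑ k : Fin n, L11 i k = ∑ k : Fin n, Lw (Fin.castSucc i) (Fin.castSucc k) := by
      simp [hL11]
    rw [Matrix.mul_apply]
    simp only [hBdef, hJc, Matrix.of_apply, mul_neg, mul_one]
    rw [Finset.sum_neg_distrib]
    linear_combination this + hsum
  have hC : C = Jr * L11 := by
    refine Matrix.ext fun i j => ?_
    have := hcolL (Fin.castSucc j)
    rw [Fin.sum_univ_castSucc] at this
    have hsum : ∑ k : Fin n, L11 k j = ∑ k : Fin n, Lw (Fin.castSucc k) (Fin.castSucc j) := by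
      simp [hL11]
    rw [Matrix.mul_apply]
    simp only [hCdef, hJr, Matrix.of_apply, neg_mul, one_mul]
    rw [Finset.sum_neg_distrib]
    linear_combination this + hsum
  have hD : D = Jr * L11 * Jc := by
    refine Matrix.ext fun i j => ?_
    have := hrowL (Fin.last n)
    rw [Fin.sum_univ_castSucc] at this
    have hsum : ∑ k : Fin n, (Jr * L11) i k = ∑ k : Fin n, Lw (Fin.last n) (Fin.castSucc k) := by
      refine Finset.sum_congr rfl fun k _ => ?_
      rw [← hC]
      simp [hCdef]
    rw [Matrix.mul_apply]
    simp only [hDdef, hJc, Matrix.of_apply, mul_neg, mul_one]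
    rw [Finset.sum_neg_distrib]
    linear_combination this + hsum
  -- conclude
  have hinj : Function.Injective fun M : Matrix (Fin (n + 1)) (Fin (n + 1)) (DualNumber ℝ) =>
      M.submatrix e e := by
    intro M N h
    have h2 : ∀ i j, M (e i) (e j) = N (e i) (e j) := fun i j =>
      congrFun (congrFun h i) j
    refine Matrix.ext fun i j => ?_
    have := h2 (e.symm i) (e.symm j)
    simpa using this
  apply hinj
  show (Lw * X * Lw).submatrix e e = Lw.submatrix e e
  rw [← Matrix.submatrix_mul_equiv (Lw * X) Lw (⇑e) e (⇑e),
    ← Matrix.submatrix_mul_equiv Lw X (⇑e) e (⇑e),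
    hsub, hXsub, Matrix.fromBlocks_multiply, Matrix.fromBlocks_multiply]
  simp only [Matrix.mul_zero, Matrix.zero_mul, add_zero, zero_add, hAA,
    Matrix.mul_one, Matrix.one_mul]
  have h1 : C * L11⁻¹ * L11 = C := by rw [Matrix.mul_assoc, hAA', Matrix.mul_one]
  have h2 : C * L11⁻¹ * B = D := by
    rw [hB, hC, hD, Matrix.mul_assoc (Jr * L11) L11⁻¹ (L11 * Jc),
      ← Matrix.mul_assoc L11⁻¹ L11 Jc, hAA', Matrix.one_mul]
  rw [h1, h2]
end

section
/- Let L_w be the dual Laplacian of a connected dual number weighted graph on n vertices. Then the dual Kirchhoff index Kf(G^w) = (1/2) Σ_{i,j} R_{ij}(G^w) equals n·tr(L_w†), and Kf(G^w) = Kf(G) - n·tr(L† L̂ L†) ε, where Kf(G) = n·tr(L†). -/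
/-!
For a matrix `X` whose rows sum to zero, `∑_{i,j} (X_ii + X_jj - 2 X_ij) = 2 n · tr X`, over any
commutative ring. The rows of `L†` sum to zero, since `L† = L† (L L†)ᵀ` and `L 1 = 0`; hence so do
the rows of `L_w† = L† - L† L̂ L† ε`, and the formula follows by splitting `tr L_w†` into its
standard and infinitesimal parts.
-/

open Matrix

namespace Matrix

variable {m n R : Type*} [Fintype m] [Fintype n]

theorem mulVec_eq_zero_of_mul_mul_eq_self [CommSemiring R] {A : Matrix m n R}
    {X : Matrix n m R} {v : m → R} (hXAX : X * A * X = X) (hAX : (A * X)ᵀ = A * X)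
    (hv : Aᵀ *ᵥ v = 0) : X *ᵥ v = 0 := by
  rw [← hXAX, Matrix.mul_assoc, ← hAX, transpose_mul, ← mulVec_mulVec, ← mulVec_mulVec, hv,
    mulVec_zero, mulVec_zero]

theorem sum_sum_diag_add_diag_sub_two_mul_of_mulVec_one_eq_zero [CommRing R] {X : Matrix n n R}
    (hX : X *ᵥ 1 = 0) :
    ∑ i, ∑ j, (X i i + X j j - 2 * X i j) = 2 * (Fintype.card n * X.trace) := by
  have hrow (i : n) : ∑ j, X i j = 0 := by
    simpa [mulVec, dotProduct] using congrFun hX i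
  simp only [Finset.sum_sub_distrib, Finset.sum_add_distrib, ← Finset.mul_sum, hrow,
    Finset.sum_const, Finset.card_univ, trace, diag, nsmul_eq_mul, mul_zero, sub_zero]
  ring

end Matrix

theorem dm_mulVec_one {m n : Type*} [Fintype n] (A B : Matrix m n ℝ) :
    dm A B *ᵥ 1 = fun i => TrivSqZeroExt.inl ((A *ᵥ 1) i) + TrivSqZeroExt.inr ((B *ᵥ 1) i) := by
  ext i <;> simp [dm, mulVec, dotProduct, TrivSqZeroExt.fst_sum, TrivSqZeroExt.snd_sum]

theorem trace_dm {n : Type*} [Fintype n] (A B : Matrix n n ℝ) :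
    (dm A B).trace = TrivSqZeroExt.inl A.trace + TrivSqZeroExt.inr B.trace := by
  ext <;> simp [dm, trace, TrivSqZeroExt.fst_sum, TrivSqZeroExt.snd_sum]

theorem dual_kirchhoff_index_formula_general {n : ℕ}
    (G : SimpleGraph (Fin n)) [DecidableRel G.Adj]
    (Lhat : Matrix (Fin n) (Fin n) ℝ)
    (Ld : Matrix (Fin n) (Fin n) ℝ)
    (h2 : Ld * G.lapMatrix ℝ * Ld = Ld)
    (h3 : (G.lapMatrix ℝ * Ld)ᵀ = G.lapMatrix ℝ * Ld)
    (Lwd : Matrix (Fin n) (Fin n) (DualNumber ℝ))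
    (hLwd : Lwd = dm Ld (-(Ld * Lhat * Ld))) :
    (2 : ℝ)⁻¹ • ∑ i : Fin n, ∑ j : Fin n, (Lwd i i + Lwd j j - 2 * Lwd i j)
        = (n : ℝ) • Lwd.trace ∧
      (2 : ℝ)⁻¹ • ∑ i : Fin n, ∑ j : Fin n, (Lwd i i + Lwd j j - 2 * Lwd i j)
        = TrivSqZeroExt.inl ((n : ℝ) * Ld.trace)
          - TrivSqZeroExt.inr ((n : ℝ) * (Ld * Lhat * Ld).trace) := by
  have hLd : Ld *ᵥ 1 = 0 := mulVec_eq_zero_of_mul_mul_eq_self h2 h3 <| by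
    rw [(G.isSymm_lapMatrix ℝ).eq]
    exact G.lapMatrix_mulVec_const_eq_zero
  have hLwd_one : Lwd *ᵥ 1 = 0 := by
    rw [hLwd, dm_mulVec_one, neg_mulVec, ← mulVec_mulVec, hLd, mulVec_zero]
    ext1 i
    simp
  have hKf : (2 : ℝ)⁻¹ • ∑ i : Fin n, ∑ j : Fin n, (Lwd i i + Lwd j j - 2 * Lwd i j)
      = (n : ℝ) • Lwd.trace := by
    rw [sum_sum_diag_add_diag_sub_two_mul_of_mulVec_one_eq_zero hLwd_one, Fintype.card_fin,
      two_mul, ← two_smul ℝ, smul_smul, inv_mul_cancel₀ two_ne_zero, one_smul, ← nsmul_eq_mul, Nat.cast_smul_eq_nsmul]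
  refine ⟨hKf, hKf.trans ?_⟩
  rw [hLwd, trace_dm, trace_neg]
  ext <;> simp

/-- The dual Kirchhoff index `Kf(G^w) = (1/2) ∑_{i,j} R_{ij}(G^w)` equals `n·tr(L_w†)`,
and `Kf(G^w) = Kf(G) - n·tr(L† L̂ L†) ε` with `Kf(G) = n·tr(L†)`. -/
theorem dual_kirchhoff_index_formula {n : ℕ} (hn : 0 < n)
    (G : SimpleGraph (Fin n)) [DecidableRel G.Adj] (hG : G.Connected)
    (Lhat : Matrix (Fin n) (Fin n) ℝ) (hsym : Lhatᵀ = Lhat)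
    (hrow : Lhat *ᵥ (fun _ => (1 : ℝ)) = 0)
    (hcol : (fun _ => (1 : ℝ)) ᵥ* Lhat = 0)
    (Ld : Matrix (Fin n) (Fin n) ℝ)
    (h1 : G.lapMatrix ℝ * Ld * G.lapMatrix ℝ = G.lapMatrix ℝ)
    (h2 : Ld * G.lapMatrix ℝ * Ld = Ld)
    (h3 : (G.lapMatrix ℝ * Ld)ᵀ = G.lapMatrix ℝ * Ld)
    (h4 : (Ld * G.lapMatrix ℝ)ᵀ = Ld * G.lapMatrix ℝ)
    (Lw Lwd : Matrix (Fin n) (Fin n) (DualNumber ℝ))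
    (hLw : Lw = dm (G.lapMatrix ℝ) Lhat)
    (hmp1 : Lw * Lwd * Lw = Lw) (hmp2 : Lwd * Lw * Lwd = Lwd)
    (hmp3 : (Lw * Lwd)ᵀ = Lw * Lwd) (hmp4 : (Lwd * Lw)ᵀ = Lwd * Lw)
    (hLwd : Lwd = dm Ld (-(Ld * Lhat * Ld))) :
    (2 : ℝ)⁻¹ • ∑ i : Fin n, ∑ j : Fin n, (Lwd i i + Lwd j j - 2 * Lwd i j)
        = (n : ℝ) • Lwd.trace ∧
      (2 : ℝ)⁻¹ • ∑ i : Fin n, ∑ j : Fin n, (Lwd i i + Lwd j j - 2 * Lwd i j)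
        = TrivSqZeroExt.inl ((n : ℝ) * Ld.trace)
          - TrivSqZeroExt.inr ((n : ℝ) * (Ld * Lhat * Ld).trace) :=
  dual_kirchhoff_index_formula_general G Lhat Ld h2 h3 Lwd hLwd
end

section
/- Let G be a connected graph on n vertices with Laplacian eigenvalues λ₁ ≥ ⋯ ≥ λ_{n-1} > λ_n = 0 and L̂ symmetric with zero row and column sums. Then |ΔKf(G^w)| = n·|tr(L† L̂ L†)| ≤ n·ρ(L̂)·Σ_{i=1}^{n-1} 1/λ_i², where ρ(L̂) is the spectral radius of L̂. -/
/-!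
The four Penrose equations determine `L†` uniquely, and `cfc (x ↦ x⁻¹) L` satisfies them because
`0⁻¹ = 0`. Hence `L†` is symmetric with `tr (L† L†) = ∑ 1 / λᵢ²`. Diagonalising
`L̂ = Q diag(f) Qᵀ` and writing `Z = Qᵀ L†` gives `tr (L† L̂ L†) = ∑ₖⱼ fₖ Zₖⱼ²`, whose absolute
value is at most `ρ(L̂) ∑ₖⱼ Zₖⱼ² = ρ(L̂) tr (L† L†)`.
-/

open Matrix

namespace Matrix

variable {m n R : Type*} [Fintype m] [Fintype n]

structure IsMoorePenroseInverse_s18 [CommSemiring R] (A : Matrix m n R) (X : Matrix n m R) : Prop where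
  mul_inv_mul : A * X * A = A
  inv_mul_inv : X * A * X = X
  isSymm_mul_inv : (A * X).IsSymm
  isSymm_inv_mul : (X * A).IsSymm

theorem IsMoorePenroseInverse_s18.eq [CommSemiring R] {A : Matrix m n R} {X Y : Matrix n m R}
    (hX : IsMoorePenroseInverse_s18 A X) (hY : IsMoorePenroseInverse_s18 A Y) : X = Y := by
  have hAX : A * X = A * Y := by
    calc A * X = (A * Y * (A * X))ᵀ := by
          rw [← Matrix.mul_assoc, hY.mul_inv_mul, hX.isSymm_mul_inv.eq]
      _ = A * X * A * Y := by
          rw [transpose_mul, hX.isSymm_mul_inv.eq, hY.isSymm_mul_inv.eq]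
          simp only [Matrix.mul_assoc]
      _ = A * Y := by rw [hX.mul_inv_mul]
  have hXA : X * A = Y * A := by
    calc X * A = (X * A * (Y * A))ᵀ := by
          rw [Matrix.mul_assoc, ← Matrix.mul_assoc A, hY.mul_inv_mul, hX.isSymm_inv_mul.eq]
      _ = Y * (A * X * A) := by
          rw [transpose_mul, hX.isSymm_inv_mul.eq, hY.isSymm_inv_mul.eq]
          simp only [Matrix.mul_assoc]
      _ = Y * A := by rw [hX.mul_inv_mul]
  calc X = X * A * X := hX.inv_mul_inv.symm
    _ = Y * A * Y := by rw [Matrix.mul_assoc, hAX, ← Matrix.mul_assoc, hXA]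
    _ = Y := hY.inv_mul_inv

theorem trace_transpose_mul_diagonal_mul [CommSemiring R] [DecidableEq m] (Z : Matrix m n R)
    (f : m → R) : trace (Zᵀ * diagonal f * Z) = ∑ i, ∑ j, f i * Z i j ^ 2 := by
  simp only [trace, diag, mul_apply, transpose_apply, diagonal_apply, mul_ite, mul_zero,
    Finset.sum_ite_eq', Finset.mem_univ, if_true]
  rw [Finset.sum_comm]
  exact Finset.sum_congr rfl fun i _ => Finset.sum_congr rfl fun j _ => by ring

theorem abs_trace_transpose_mul_diagonal_mul_le [CommRing R] [LinearOrder R]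
    [IsStrictOrderedRing R] [DecidableEq m] (Z : Matrix m n R) {f : m → R} {ρ : R}
    (hf : ∀ i, |f i| ≤ ρ) : |trace (Zᵀ * diagonal f * Z)| ≤ ρ * trace (Zᵀ * Z) := by
  have hZ : trace (Zᵀ * Z) = ∑ i, ∑ j, Z i j ^ 2 := by
    simpa using trace_transpose_mul_diagonal_mul Z 1
  rw [trace_transpose_mul_diagonal_mul, hZ, Finset.mul_sum]
  refine (Finset.abs_sum_le_sum_abs _ _).trans (Finset.sum_le_sum fun i _ => ?_)
  rw [Finset.mul_sum]
  refine (Finset.abs_sum_le_sum_abs _ _).trans (Finset.sum_le_sum fun j _ => ?_)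
  rw [abs_mul, abs_of_nonneg (sq_nonneg (Z i j))]
  exact mul_le_mul_of_nonneg_right (hf i) (sq_nonneg _)

section FunctionalCalculus

variable [DecidableEq n]

theorem cfc_mul_cfc {𝕜 : Type*} [RCLike 𝕜] (A : Matrix n n 𝕜) (f g : ℝ → ℝ) :
    cfc f A * cfc g A = cfc (fun x => f x * g x) A :=
  (cfc_mul f g A (A.finite_real_spectrum.continuousOn f)
    (A.finite_real_spectrum.continuousOn g)).symm

theorem isSymm_cfc (A : Matrix n n ℝ) (f : ℝ → ℝ) : (cfc f A).IsSymm := by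
  have := (cfc_predicate f A : IsSelfAdjoint (cfc f A))
  rwa [IsSelfAdjoint, star_eq_conjTranspose, conjTranspose_eq_transpose_of_trivial] at this

namespace IsHermitian

theorem isMoorePenroseInverse_cfc_inv {A : Matrix n n ℝ} (hA : A.IsHermitian) :
    IsMoorePenroseInverse_s18 A (cfc (fun x : ℝ => x⁻¹) A) := by
  have hid : cfc (fun x : ℝ => x) A = A := cfc_id' ℝ A
  have hAX : A * cfc (fun x : ℝ => x⁻¹) A = cfc (fun x : ℝ => x * x⁻¹) A := by
    rw [← cfc_mul_cfc, hid]
  have hXA : cfc (fun x : ℝ => x⁻¹) A * A = cfc (fun x : ℝ => x⁻¹ * x) A := by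
    rw [← cfc_mul_cfc, hid]
  refine ⟨?_, ?_, hAX ▸ isSymm_cfc _ _, hXA ▸ isSymm_cfc _ _⟩
  · calc A * cfc (fun x : ℝ => x⁻¹) A * A = cfc (fun x : ℝ => x * x⁻¹ * x) A := by
          rw [← cfc_mul_cfc, ← cfc_mul_cfc, hid]
      _ = A := by simp only [mul_inv_mul_cancel, hid]
  · calc cfc (fun x : ℝ => x⁻¹) A * A * cfc (fun x : ℝ => x⁻¹) A
          = cfc (fun x : ℝ => x⁻¹ * x * x⁻¹) A := by rw [← cfc_mul_cfc, ← cfc_mul_cfc, hid]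
      _ = cfc (fun x : ℝ => x⁻¹) A := by
          congr 1 with x
          simpa only [inv_inv] using mul_inv_mul_cancel x⁻¹

theorem trace_cfc {𝕜 : Type*} [RCLike 𝕜] {A : Matrix n n 𝕜} (hA : A.IsHermitian) (f : ℝ → ℝ) :
    trace (cfc f A) = ∑ i, (f (hA.eigenvalues i) : 𝕜) := by
  rw [hA.cfc_eq, IsHermitian.cfc, Unitary.conjStarAlgAut_apply, trace_mul_cycle,
    Unitary.coe_star_mul_self, one_mul, trace_diagonal]
  rfl

theorem spectral_theorem_real {A : Matrix n n ℝ} (hA : A.IsHermitian) :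
    A = (hA.eigenvectorUnitary : Matrix n n ℝ) * diagonal hA.eigenvalues *
      (hA.eigenvectorUnitary : Matrix n n ℝ)ᵀ := by
  conv_lhs => rw [hA.spectral_theorem]
  simp [Unitary.conjStarAlgAut_apply, star_eq_conjTranspose]

theorem abs_trace_transpose_mul_mul_le {B : Matrix n n ℝ} (hB : B.IsHermitian) (Y : Matrix n m ℝ)
    {ρ : ℝ} (hρ : ∀ i, |hB.eigenvalues i| ≤ ρ) : |trace (Yᵀ * B * Y)| ≤ ρ * trace (Yᵀ * Y) := by
  set U : Matrix n n ℝ := ↑hB.eigenvectorUnitary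
  have hUU : U * Uᵀ = 1 := by
    simpa [star_eq_conjTranspose] using Unitary.coe_mul_star_self hB.eigenvectorUnitary
  have hdiag : Yᵀ * B * Y = (Uᵀ * Y)ᵀ * diagonal hB.eigenvalues * (Uᵀ * Y) := by
    conv_lhs => rw [hB.spectral_theorem_real]
    simp only [transpose_mul, transpose_transpose, Matrix.mul_assoc]
    rfl
  calc |trace (Yᵀ * B * Y)| ≤ ρ * trace ((Uᵀ * Y)ᵀ * (Uᵀ * Y)) :=
        hdiag ▸ abs_trace_transpose_mul_diagonal_mul_le _ hρ
    _ = ρ * trace (Yᵀ * Y) := by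
        rw [transpose_mul, transpose_transpose, Matrix.mul_assoc, ← Matrix.mul_assoc U, hUU,
          Matrix.one_mul]

end IsHermitian

end FunctionalCalculus

end Matrix

/-- Perturbation bound for the Kirchhoff index via the spectral radius: with Laplacian
eigenvalues `λ₁ ≥ ⋯ ≥ λ_{n-1} > λ_n = 0` of a connected graph on `n` vertices and a
symmetric perturbation `L̂` with zero row and column sums,
`|ΔKf(G^w)| = n·|tr(L† L̂ L†)| ≤ n · ρ(L̂) · ∑_{i=1}^{n-1} 1/λ_i²`. -/
theorem kirchhoff_perturbation_bound_two {n : ℕ}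
    (G : SimpleGraph (Fin (n + 2))) [DecidableRel G.Adj]
    (Lhat : Matrix (Fin (n + 2)) (Fin (n + 2)) ℝ)
    (hhermLhat : Lhat.IsHermitian)
    (Ld : Matrix (Fin (n + 2)) (Fin (n + 2)) ℝ)
    (h1 : G.lapMatrix ℝ * Ld * G.lapMatrix ℝ = G.lapMatrix ℝ)
    (h2 : Ld * G.lapMatrix ℝ * Ld = Ld)
    (h3 : (G.lapMatrix ℝ * Ld)ᵀ = G.lapMatrix ℝ * Ld)
    (h4 : (Ld * G.lapMatrix ℝ)ᵀ = Ld * G.lapMatrix ℝ)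
    (hhermL : (G.lapMatrix ℝ).IsHermitian)
    (lam : Fin (n + 2) → ℝ)
    (hlam : ∃ σ : Equiv.Perm (Fin (n + 2)), ∀ i, hhermL.eigenvalues (σ i) = lam i)
    (hzero : lam (Fin.last (n + 1)) = 0) :
    |(((n : ℝ) + 2)) * (Ld * Lhat * Ld).trace|
      ≤ ((n : ℝ) + 2)
          * (Finset.univ.sup' Finset.univ_nonempty fun i => |hhermLhat.eigenvalues i|)
          * ∑ i ∈ Finset.univ.erase (Fin.last (n + 1)), 1 / (lam i) ^ 2 := by
  obtain ⟨σ, hσ⟩ := hlam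
  have hLd : Ld = cfc (fun x : ℝ => x⁻¹) (G.lapMatrix ℝ) :=
    IsMoorePenroseInverse_s18.eq ⟨h1, h2, h3, h4⟩ hhermL.isMoorePenroseInverse_cfc_inv
  have hLd_symm : Ldᵀ = Ld := hLd ▸ isSymm_cfc _ _
  have hsq : (Ldᵀ * Ld).trace = ∑ i ∈ Finset.univ.erase (Fin.last (n + 1)), 1 / lam i ^ 2 := by
    rw [hLd_symm, hLd, cfc_mul_cfc, hhermL.trace_cfc, ← Equiv.sum_comp σ,
      Finset.sum_erase _ (by simp [hzero])]
    simp [hσ, sq]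
  have hbound := hhermLhat.abs_trace_transpose_mul_mul_le Ld
    (ρ := Finset.univ.sup' Finset.univ_nonempty fun i => |hhermLhat.eigenvalues i|)
    fun i => Finset.le_sup' (fun i => |hhermLhat.eigenvalues i|) (Finset.mem_univ i)
  rw [hsq, hLd_symm] at hbound
  have hn : (0 : ℝ) ≤ n + 2 := by positivity
  rw [abs_mul, abs_of_nonneg hn, mul_assoc (n + 2 : ℝ)]
  exact mul_le_mul_of_nonneg_left hbound hn
end

section
/- Let e = {i, j} be an edge of a connected graph G on n vertices, and let the perturbation matrix L̂ be â_e (1_i - 1_j)(1_i - 1_j)ᵀ (perturbation only on edge e) with â_e ≠ 0. Then the eigenvalues of L̂ are 2â_e (simple) and 0 (multiplicity n-1), and the Kirchhoff index perturbation ΔKf(G^w_e) = -n·tr(L† L̂ L†) satisfies 1/λ₁² ≤ ΔKf(G^w_e) / (-2n â_e) ≤ 1/λ_{n-1}², where λ₁ ≥ ⋯ ≥ λ_{n-1} > 0 are the nonzero Laplacian eigenvalues of G. -/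
/-!
`L̂ = a uuᵀ` with `u = 1_i - 1_j` has rank one, so its characteristic polynomial is
`X^(n-1) (X - a uᵀu)` with `uᵀu = 2`.

The Penrose conditions force `L†` to be symmetric, so `tr(L† L̂ L†) = a ‖w‖²` for `w = L† u`, and
the ratio in question is `‖w‖² / 2`. Since `i` and `j` lie in one component, `u ⊥ ker L`, hence
`L w = u`; also `w ⊥ ker L`. In an orthonormal eigenbasis of `L`,
`2 = ‖L w‖² = ∑ λ_k² ⟨v_k, w⟩²` where only nonzero eigenvalues contribute, so
`λ_{n-1}² ‖w‖² ≤ 2 ≤ λ₁² ‖w‖²`.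
-/

open Matrix

namespace Matrix

variable {m : Type*} [Fintype m]

section CommSemiring

variable {R : Type*} [CommSemiring R] {A B : Matrix m m R}

theorem isSymm_of_penrose (hA : A.IsSymm) (h1 : A * B * A = A) (h2 : B * A * B = B)
    (h3 : (A * B)ᵀ = A * B) (h4 : (B * A)ᵀ = B * A) : B.IsSymm := by
  have hBA : B * A = A * Bᵀ := by rw [← h4, transpose_mul, hA.eq]
  have hAB : A * B = Bᵀ * A := by rw [← h3, transpose_mul, hA.eq]
  have hB' : B = A * (Bᵀ * B) := by rw [← mul_assoc, ← hBA, h2]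
  have hB : B = Bᵀ * A * B :=
    calc B = A * B * (A * (Bᵀ * B)) := by rw [← mul_assoc (A * B), h1, ← hB']
      _ = Bᵀ * A * B := by rw [← hB', hAB]
  calc Bᵀ = (Bᵀ * A * B)ᵀ := by rw [← hB]
    _ = B := by rw [transpose_mul, transpose_mul, transpose_transpose, hA.eq, ← mul_assoc, ← hB]

theorem dotProduct_mulVec_eq_zero_of_mulVec_eq_zero (h2 : B * A * B = B)
    (h4 : (B * A)ᵀ = B * A) {x : m → R} (hx : A *ᵥ x = 0) (u : m → R) : x ⬝ᵥ (B *ᵥ u) = 0 := by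
  rw [← h2, ← mulVec_mulVec, dotProduct_mulVec, ← mulVec_transpose, h4, ← mulVec_mulVec, hx,
    mulVec_zero, zero_dotProduct]

theorem trace_mul_vecMulVec_mul (B C : Matrix m m R) (u v : m → R) :
    (B * vecMulVec u v * C).trace = (B *ᵥ u) ⬝ᵥ (Cᵀ *ᵥ v) := by
  rw [mul_vecMulVec, vecMulVec_mul, trace_vecMulVec, mulVec_transpose]

end CommSemiring

theorem mulVec_mulVec_eq_self_of_dotProduct_eq_zero {R : Type*} [CommRing R] [LinearOrder R]
    [IsStrictOrderedRing R] {A B : Matrix m m R} (hA : A.IsSymm) (h1 : A * B * A = A)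
    (h3 : (A * B)ᵀ = A * B) {u : m → R} (hu : ∀ x, A *ᵥ x = 0 → u ⬝ᵥ x = 0) :
    A *ᵥ (B *ᵥ u) = u := by
  have hAAB : A * A * B = A := by
    rw [mul_assoc, ← transpose_transpose (A * (A * B)), transpose_mul, h3, hA.eq, h1, hA.eq]
  set r := u - A *ᵥ (B *ᵥ u)
  have hr : A *ᵥ r = 0 := by
    rw [mulVec_sub, mulVec_mulVec, mulVec_mulVec, hAAB, sub_self]
  have hrr : r ⬝ᵥ r = 0 := by
    rw [dotProduct_sub, dotProduct_comm r u, hu r hr, dotProduct_mulVec, ← mulVec_transpose, hA.eq,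
      hr, zero_dotProduct, sub_zero]
  exact (sub_eq_zero.mp (dotProduct_self_eq_zero.mp hrr)).symm

namespace IsHermitian

variable [DecidableEq m] {A : Matrix m m ℝ} (hA : A.IsHermitian)

theorem sum_sq_eigenvectorBasis_dotProduct (x : m → ℝ) :
    ∑ k, (⇑(hA.eigenvectorBasis k) ⬝ᵥ x) ^ 2 = x ⬝ᵥ x := by
  have := hA.eigenvectorBasis.sum_inner_mul_inner (WithLp.toLp 2 x) (WithLp.toLp 2 x)
  simp only [EuclideanSpace.inner_eq_star_dotProduct, star_trivial] at this
  simpa only [dotProduct_comm x, sq] using this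

theorem mulVec_dotProduct_mulVec_self (x : m → ℝ) :
    (A *ᵥ x) ⬝ᵥ (A *ᵥ x) = ∑ k, hA.eigenvalues k ^ 2 * (⇑(hA.eigenvectorBasis k) ⬝ᵥ x) ^ 2 := by
  have hAT : Aᵀ = A := by simpa [conjTranspose_eq_transpose_of_trivial] using hA.eq
  rw [← hA.sum_sq_eigenvectorBasis_dotProduct]
  refine Finset.sum_congr rfl fun k _ => ?_
  rw [dotProduct_mulVec, ← mulVec_transpose, hAT, hA.mulVec_eigenvectorBasis, smul_dotProduct,
    smul_eq_mul, mul_pow]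

theorem mulVec_dotProduct_mulVec_self_le {C : ℝ} (hC : ∀ k, hA.eigenvalues k ^ 2 ≤ C)
    (x : m → ℝ) : (A *ᵥ x) ⬝ᵥ (A *ᵥ x) ≤ C * (x ⬝ᵥ x) := by
  rw [hA.mulVec_dotProduct_mulVec_self, ← hA.sum_sq_eigenvectorBasis_dotProduct, Finset.mul_sum]
  exact Finset.sum_le_sum fun k _ => mul_le_mul_of_nonneg_right (hC k) (sq_nonneg _)

theorem le_mulVec_dotProduct_mulVec_self {c : ℝ}
    (hc : ∀ k, hA.eigenvalues k ≠ 0 → c ≤ hA.eigenvalues k ^ 2) {x : m → ℝ}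
    (hx : ∀ v, A *ᵥ v = 0 → v ⬝ᵥ x = 0) : c * (x ⬝ᵥ x) ≤ (A *ᵥ x) ⬝ᵥ (A *ᵥ x) := by
  rw [hA.mulVec_dotProduct_mulVec_self, ← hA.sum_sq_eigenvectorBasis_dotProduct, Finset.mul_sum]
  refine Finset.sum_le_sum fun k _ => ?_
  by_cases hk : hA.eigenvalues k = 0
  · have hker : A *ᵥ ⇑(hA.eigenvectorBasis k) = 0 := by
      rw [hA.mulVec_eigenvectorBasis, hk, zero_smul]
    simp [hk, hx _ hker]
  · exact mul_le_mul_of_nonneg_right (hc k hk) (sq_nonneg _)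

theorem map_eigenvalues_eq_of_eq_vecMulVec [Nonempty m] {u v : m → ℝ} (h : A = vecMulVec u v) :
    Finset.univ.val.map hA.eigenvalues
      = (u ⬝ᵥ v) ::ₘ Multiset.replicate (Fintype.card m - 1) 0 := by
  obtain ⟨N, hN⟩ : ∃ N, Fintype.card m = N + 1 :=
    Nat.exists_eq_succ_of_ne_zero Fintype.card_ne_zero
  have hchar : A.charpoly = Polynomial.X ^ N * (Polynomial.X - Polynomial.C (u ⬝ᵥ v)) := by
    rw [h, charpoly_vecMulVec, hN, Nat.add_sub_cancel, pow_succ, Polynomial.smul_eq_C_mul]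
    ring
  have hroots := hA.roots_charpoly_eq_eigenvalues
  rw [hchar, Polynomial.roots_mul
    (mul_ne_zero (pow_ne_zero _ Polynomial.X_ne_zero) (Polynomial.X_sub_C_ne_zero _))] at hroots
  simp only [Polynomial.roots_pow, Polynomial.roots_X, Polynomial.roots_X_sub_C,
    RCLike.ofReal_real_eq_id, Function.comp_apply, id_eq] at hroots
  rw [hN, Nat.add_sub_cancel, ← hroots, Multiset.nsmul_singleton, add_comm, Multiset.singleton_add]

end IsHermitian

end Matrix

theorem single_sub_single_dotProduct_self {R : Type*} [Ring R] {V : Type*} [Fintype V]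
    [DecidableEq V] {i j : V} (hij : i ≠ j) :
    (Pi.single i 1 - Pi.single j 1 : V → R) ⬝ᵥ (Pi.single i 1 - Pi.single j 1) = 2 := by
  simp [hij, hij.symm, one_add_one_eq_two]

theorem SimpleGraph.Reachable.single_sub_single_dotProduct_eq_zero {V : Type*} [Fintype V]
    [DecidableEq V] {G : SimpleGraph V} [DecidableRel G.Adj] {i j : V} (hij : G.Reachable i j)
    {x : V → ℝ} (hx : G.lapMatrix ℝ *ᵥ x = 0) : (Pi.single i 1 - Pi.single j 1) ⬝ᵥ x = 0 := by
  rw [sub_dotProduct, single_one_dotProduct, single_one_dotProduct, sub_eq_zero]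
  exact G.lapMatrix_mulVec_eq_zero_iff_forall_reachable.mp hx i j hij

section SortedSpectrum

variable {α : Type*} [Semiring α] [LinearOrder α] [IsOrderedRing α] {n : ℕ}
  {f : Fin (n + 2) → α}

theorem Antitone.sq_le_sq_apply_zero (hf : Antitone f) (hlast : f (Fin.last (n + 1)) = 0)
    (k : Fin (n + 2)) : f k ^ 2 ≤ f 0 ^ 2 :=
  pow_le_pow_left₀ (hlast ▸ hf (Fin.le_last k)) (hf (Fin.zero_le k)) 2

theorem Antitone.sq_apply_castSucc_last_le_sq (hf : Antitone f)
    (hlast : f (Fin.last (n + 1)) = 0) {k : Fin (n + 2)} (hk : f k ≠ 0) :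
    f (Fin.last n).castSucc ^ 2 ≤ f k ^ 2 := by
  have hk' : k ≠ Fin.last (n + 1) := fun h => hk (h ▸ hlast)
  have hnonneg : 0 ≤ f (Fin.last n).castSucc := hlast ▸ hf (Fin.le_last _)
  exact pow_le_pow_left₀ hnonneg
    (hf (Fin.le_castSucc_iff.mpr (Fin.lt_last_iff_ne_last.mpr hk'))) 2

end SortedSpectrum

/-- Single-edge perturbation: for an edge `e = {i,j}` of a connected graph `G` on `n`
vertices, the perturbation matrix `L̂ = â_e (1_i - 1_j)(1_i - 1_j)ᵀ` with `â_e ≠ 0` has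
eigenvalues `2â_e` (simple) and `0` (multiplicity `n-1`), and the Kirchhoff index
perturbation `ΔKf(G^w_e) = -n·tr(L† L̂ L†)` satisfies
`1/λ₁² ≤ ΔKf(G^w_e) / (-2n â_e) ≤ 1/λ_{n-1}²`. -/
theorem kirchhoff_perturbation_single_edge {n : ℕ}
    (G : SimpleGraph (Fin (n + 2))) [DecidableRel G.Adj]
    (i j : Fin (n + 2)) (hadj : G.Adj i j) (a : ℝ) (ha : a ≠ 0)
    (Lhat : Matrix (Fin (n + 2)) (Fin (n + 2)) ℝ)
    (hLhat : Lhat = a • Matrix.vecMulVec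
      ((Pi.single i 1 - Pi.single j 1 : Fin (n + 2) → ℝ))
      ((Pi.single i 1 - Pi.single j 1 : Fin (n + 2) → ℝ)))
    (hhermLhat : Lhat.IsHermitian)
    (Ld : Matrix (Fin (n + 2)) (Fin (n + 2)) ℝ)
    (h1 : G.lapMatrix ℝ * Ld * G.lapMatrix ℝ = G.lapMatrix ℝ)
    (h2 : Ld * G.lapMatrix ℝ * Ld = Ld)
    (h3 : (G.lapMatrix ℝ * Ld)ᵀ = G.lapMatrix ℝ * Ld)
    (h4 : (Ld * G.lapMatrix ℝ)ᵀ = Ld * G.lapMatrix ℝ)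
    (hhermL : (G.lapMatrix ℝ).IsHermitian)
    (lam : Fin (n + 2) → ℝ) (hanti : Antitone lam)
    (hlam : ∃ σ : Equiv.Perm (Fin (n + 2)), ∀ k, hhermL.eigenvalues (σ k) = lam k)
    (hzero : lam (Fin.last (n + 1)) = 0)
    (hpos : 0 < lam ⟨n, by omega⟩) :
    (Finset.univ.val.map hhermLhat.eigenvalues
        = (2 * a) ::ₘ Multiset.replicate (n + 1) 0) ∧
      1 / (lam 0) ^ 2
          ≤ (-(((n : ℝ) + 2)) * (Ld * Lhat * Ld).trace) / (-2 * ((n : ℝ) + 2) * a) ∧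
        (-(((n : ℝ) + 2)) * (Ld * Lhat * Ld).trace) / (-2 * ((n : ℝ) + 2) * a)
          ≤ 1 / (lam ⟨n, by omega⟩) ^ 2 := by
  set u : Fin (n + 2) → ℝ := Pi.single i 1 - Pi.single j 1
  set w := Ld *ᵥ u
  have huu : u ⬝ᵥ u = 2 := single_sub_single_dotProduct_self (G.ne_of_adj hadj)
  have hL : (G.lapMatrix ℝ).IsSymm := G.isSymm_lapMatrix ℝ
  have hLd : Ld.IsSymm := isSymm_of_penrose hL h1 h2 h3 h4
  have hLw : G.lapMatrix ℝ *ᵥ w = u := mulVec_mulVec_eq_self_of_dotProduct_eq_zero hL h1 h3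
    fun _ hx => hadj.reachable.single_sub_single_dotProduct_eq_zero hx
  have hratio : (-(((n : ℝ) + 2)) * (Ld * Lhat * Ld).trace) / (-2 * ((n : ℝ) + 2) * a)
      = (w ⬝ᵥ w) / 2 := by
    rw [hLhat, Matrix.mul_smul, Matrix.smul_mul, trace_smul, trace_mul_vecMulVec_mul, hLd.eq,
      smul_eq_mul]
    field_simp
    rfl
  obtain ⟨σ, hσ⟩ := hlam
  have hμ : ∀ k, hhermL.eigenvalues k = lam (σ.symm k) := fun k => by
    rw [← hσ, Equiv.apply_symm_apply]
  have hupper : 2 ≤ lam 0 ^ 2 * (w ⬝ᵥ w) := huu ▸ hLw ▸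
    hhermL.mulVec_dotProduct_mulVec_self_le (fun k => hμ k ▸ hanti.sq_le_sq_apply_zero hzero _) w
  have hlower : lam ⟨n, by omega⟩ ^ 2 * (w ⬝ᵥ w) ≤ 2 := huu ▸ hLw ▸
    hhermL.le_mulVec_dotProduct_mulVec_self
      (fun k hk => hμ k ▸ hanti.sq_apply_castSucc_last_le_sq hzero (hμ k ▸ hk))
      fun _ hx => dotProduct_mulVec_eq_zero_of_mulVec_eq_zero h2 h4 hx u
  have hlam0 : 0 < lam 0 := hpos.trans_le (hanti (Fin.zero_le _))
  refine ⟨?_, ?_, ?_⟩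
  · rw [hhermLhat.map_eigenvalues_eq_of_eq_vecMulVec (u := a • u) (v := u)
      (by rw [hLhat, smul_vecMulVec]), smul_dotProduct, huu, smul_eq_mul, mul_comm,
      Fintype.card_fin]
    rfl
  · rw [hratio, div_le_div_iff₀ (by positivity) two_pos]
    linarith
  · rw [hratio, div_le_div_iff₀ two_pos (by positivity)]
    linarith
end
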